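/- arXiv:2508.07134 — 3 statements merged into one kernel-verified Lean document; each statement's English description precedes it below -/
import Mathlib

section
/- Let x_1, ..., x_n ∈ ℝ^m with scatter matrix S = Σ_{j=1}^n x_j x_jᵀ, and suppose H is an orthogonal matrix with columns γ_1, ..., γ_m such that HᵀSH = diag(λ_1, ..., λ_m). Fix k with 1 ≤ k ≤ m, set p_{ij} = γ_iᵀ x_j, and define the approximations x̃_j = Σ_{i=1}^k p_{ij} γ_i (the projection of x_j onto the span of γ_1, ..., γ_k). Then the total reconstruction error is Σ_{j=1}^n ‖x_j − x̃_j‖² = λ_{k+1} + λ_{k+2} + ... + λ_m. -/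
open Matrix Finset

/-- If `H` is orthogonal and diagonalizes the scatter matrix `S = ∑ⱼ xⱼ xⱼᵀ`
with eigenvalues `lam i`, and `x̃ⱼ = ∑_{i<k} pᵢⱼ γᵢ` is the projection of `xⱼ`
onto the span of the first `k` columns of `H`, then the total squared
reconstruction error equals `lam (k+1) + ... + lam m`. -/
theorem projection_reconstruction_error
    (m n : ℕ) (x : Fin n → Fin m → ℝ)
    (S : Matrix (Fin m) (Fin m) ℝ)
    (hS : S = ∑ j, Matrix.vecMulVec (x j) (x j))
    (H : Matrix (Fin m) (Fin m) ℝ)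
    (hH : Hᵀ * H = 1)
    (lam : Fin m → ℝ)
    (hdiag : Hᵀ * S * H = Matrix.diagonal lam)
    (γ : Fin m → Fin m → ℝ)
    (hγ : ∀ i r, γ i r = H r i)
    (p : Fin m → Fin n → ℝ)
    (hp : ∀ i j, p i j = ∑ r, γ i r * x j r)
    (k : ℕ) (hk1 : 1 ≤ k) (hkm : k ≤ m)
    (xt : Fin n → Fin m → ℝ)
    (hxt : ∀ j, xt j = ∑ i ∈ univ.filter (fun i : Fin m => (i : ℕ) < k),
        fun r => p i j * γ i r) :
    ∑ j, ∑ r, (x j r - xt j r) ^ 2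
      = ∑ i ∈ univ.filter (fun i : Fin m => k ≤ (i : ℕ)), lam i := by
  have hHH : H * Hᵀ = 1 := mul_eq_one_comm.mp hH
  have horth : ∀ i i' : Fin m, ∑ r, H r i * H r i' = if i = i' then 1 else 0 := by
    intro i i'
    have := congrFun (congrFun hH i) i'
    simpa [Matrix.mul_apply, Matrix.transpose_apply, Matrix.one_apply] using this
  have hrow : ∀ r s : Fin m, ∑ i, H r i * H s i = if r = s then 1 else 0 := by
    intro r s
    have := congrFun (congrFun hHH r) s
    simpa [Matrix.mul_apply, Matrix.transpose_apply, Matrix.one_apply] using this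
  -- expansion of x in the basis
  have hexp : ∀ j r, x j r = ∑ i, p i j * H r i := by
    intro j r
    have : ∑ i, p i j * H r i = ∑ s, x j s * ∑ i, H r i * H s i := by
      simp only [hp, hγ, Finset.sum_mul, Finset.mul_sum]
      rw [Finset.sum_comm]
      congr 1; ext s; congr 1; ext i; ring
    rw [this]
    simp [hrow]
  -- the residual
  have hdiff : ∀ j r, x j r - xt j r
      = ∑ i ∈ univ.filter (fun i : Fin m => k ≤ (i : ℕ)), p i j * H r i := by
    intro j r
    have hx : xt j r = ∑ i ∈ univ.filter (fun i : Fin m => (i : ℕ) < k), p i j * H r i := by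
      rw [hxt j]
      rw [Finset.sum_apply]
      simp [hγ]
    have hsplit := Finset.sum_filter_add_sum_filter_not univ
      (fun i : Fin m => (i : ℕ) < k) (fun i => p i j * H r i)
    have hnot : (univ.filter fun i : Fin m => ¬ (i : ℕ) < k)
        = univ.filter (fun i : Fin m => k ≤ (i : ℕ)) := by
      simp [not_lt]
    rw [hexp j r, hx, ← hsplit, hnot]
    ring
  -- squared norm of the residual
  have hsq : ∀ j, ∑ r, (x j r - xt j r) ^ 2
      = ∑ i ∈ univ.filter (fun i : Fin m => k ≤ (i : ℕ)), p i j ^ 2 := by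
    intro j
    simp only [hdiff]
    have : ∀ r : Fin m,
        (∑ i ∈ univ.filter (fun i : Fin m => k ≤ (i : ℕ)), p i j * H r i) ^ 2
        = ∑ i ∈ univ.filter (fun i : Fin m => k ≤ (i : ℕ)),
            ∑ i' ∈ univ.filter (fun i : Fin m => k ≤ (i : ℕ)),
              (p i j * p i' j) * (H r i * H r i') := by
      intro r
      rw [sq, Finset.sum_mul_sum]
      congr 1; ext i; congr 1; ext i'; ring
    simp only [this]
    calc ∑ r : Fin m, ∑ i ∈ univ.filter (fun i : Fin m => k ≤ (i : ℕ)),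
            ∑ i' ∈ univ.filter (fun i : Fin m => k ≤ (i : ℕ)),
              (p i j * p i' j) * (H r i * H r i')
        = ∑ i ∈ univ.filter (fun i : Fin m => k ≤ (i : ℕ)), ∑ r : Fin m,
            ∑ i' ∈ univ.filter (fun i : Fin m => k ≤ (i : ℕ)),
              (p i j * p i' j) * (H r i * H r i') := Finset.sum_comm
      _ = ∑ i ∈ univ.filter (fun i : Fin m => k ≤ (i : ℕ)),
            ∑ i' ∈ univ.filter (fun i : Fin m => k ≤ (i : ℕ)), ∑ r : Fin m,
              (p i j * p i' j) * (H r i * H r i') :=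
          Finset.sum_congr rfl fun i _ => Finset.sum_comm
      _ = ∑ i ∈ univ.filter (fun i : Fin m => k ≤ (i : ℕ)),
            ∑ i' ∈ univ.filter (fun i : Fin m => k ≤ (i : ℕ)),
              (p i j * p i' j) * (if i = i' then 1 else 0) := by
          refine Finset.sum_congr rfl fun i _ => Finset.sum_congr rfl fun i' _ => ?_
          rw [← Finset.mul_sum, horth]
      _ = ∑ i ∈ univ.filter (fun i : Fin m => k ≤ (i : ℕ)), p i j ^ 2 := by
          simp only [mul_ite, mul_one, mul_zero]
          refine Finset.sum_congr rfl fun i hi => ?_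
          rw [Finset.sum_ite_eq _ i (fun i' => p i j * p i' j), if_pos hi, sq]
  -- eigenvalue identity
  have hlam : ∀ i : Fin m, ∑ j, p i j ^ 2 = lam i := by
    intro i
    have h1 := congrFun (congrFun hdiag i) i
    have h2 : (Hᵀ * S * H) i i = ∑ j, p i j ^ 2 := by
      have e1 : (Hᵀ * S * H) i i = ∑ r, (∑ s, H s i * ∑ j, x j s * x j r) * H r i := by
        simp [Matrix.mul_apply, Matrix.transpose_apply, hS, Matrix.sum_apply,
          Matrix.vecMulVec_apply]
      have swap1 : ∀ r : Fin m, (∑ s, H s i * ∑ j, x j s * x j r) * H r i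
          = ∑ j, (∑ s, H s i * x j s) * (x j r * H r i) := by
        intro r
        calc (∑ s, H s i * ∑ j, x j s * x j r) * H r i
            = ∑ s, ∑ j, H s i * x j s * (x j r * H r i) := by
              rw [Finset.sum_mul]
              refine Finset.sum_congr rfl fun s _ => ?_
              rw [Finset.mul_sum, Finset.sum_mul]
              exact Finset.sum_congr rfl fun j _ => by ring
          _ = ∑ j, ∑ s, H s i * x j s * (x j r * H r i) := Finset.sum_comm
          _ = ∑ j, (∑ s, H s i * x j s) * (x j r * H r i) :=
              Finset.sum_congr rfl fun j _ => (Finset.sum_mul _ _ _).symm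
      calc (Hᵀ * S * H) i i
          = ∑ r, ∑ j, (∑ s, H s i * x j s) * (x j r * H r i) := by
            rw [e1]; exact Finset.sum_congr rfl fun r _ => swap1 r
        _ = ∑ j, ∑ r, (∑ s, H s i * x j s) * (x j r * H r i) := Finset.sum_comm
        _ = ∑ j, p i j ^ 2 := by
            refine Finset.sum_congr rfl fun j _ => ?_
            rw [← Finset.mul_sum, sq, hp]
            congr 1
            · exact Finset.sum_congr rfl fun s _ => by rw [hγ]
            · exact Finset.sum_congr rfl fun r _ => by rw [hγ]; ring
    rw [← h2, h1, Matrix.diagonal_apply_eq]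
  calc ∑ j, ∑ r, (x j r - xt j r) ^ 2
      = ∑ j, ∑ i ∈ univ.filter (fun i : Fin m => k ≤ (i : ℕ)), p i j ^ 2 := by
        exact Finset.sum_congr rfl fun j _ => hsq j
    _ = ∑ i ∈ univ.filter (fun i : Fin m => k ≤ (i : ℕ)), ∑ j, p i j ^ 2 :=
        Finset.sum_comm
    _ = ∑ i ∈ univ.filter (fun i : Fin m => k ≤ (i : ℕ)), lam i :=
        Finset.sum_congr rfl fun i _ => hlam i
end

section
/- Let X ∈ ℝ^{m×n}, and suppose H is an orthogonal m×m matrix such that Hᵀ(XXᵀ)H = diag(λ_1, ..., λ_m) with λ_1 ≥ λ_2 ≥ ... ≥ λ_m. Then for every k with 1 ≤ k ≤ m and every pair of matrices W ∈ ℝ^{m×k} and C ∈ ℝ^{k×n}, the squared Frobenius norm of the approximation error satisfies ‖X − WC‖_F² ≥ λ_{k+1} + λ_{k+2} + ... + λ_m. -/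
open Matrix Finset RealInnerProductSpace

private lemma aux_card_filter (m k : ℕ) (hk : k ≤ m) :
    (univ.filter (fun i : Fin m => k ≤ (i : ℕ))).card = m - k := by
  rcases lt_or_eq_of_le hk with h | h
  · have he : univ.filter (fun i : Fin m => k ≤ (i : ℕ)) = Finset.Ici (⟨k, h⟩ : Fin m) := by
      ext i; simp [Fin.le_def]
    rw [he, Fin.card_Ici]
  · have he : univ.filter (fun i : Fin m => k ≤ (i : ℕ)) = ∅ := by
      ext i; simp; omega
    rw [he]; simp; omega

private lemma aux_weight (m k : ℕ) (hk1 : 1 ≤ k) (hkm : k ≤ m)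
    (lam s : Fin m → ℝ) (hlam : Antitone lam) (hnn : ∀ i, 0 ≤ lam i)
    (hs0 : ∀ i, 0 ≤ s i) (hs1 : ∀ i, s i ≤ 1)
    (hsum : (m : ℝ) - k ≤ ∑ i, s i) :
    ∑ i ∈ univ.filter (fun i : Fin m => k ≤ (i : ℕ)), lam i ≤ ∑ i, lam i * s i := by
  classical
  set A := univ.filter (fun i : Fin m => k ≤ (i : ℕ)) with hA
  set B := univ.filter (fun i : Fin m => ¬ k ≤ (i : ℕ)) with hB
  have hkm' : k - 1 < m := by omega
  set c := lam ⟨k - 1, hkm'⟩ with hc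
  have hc0 : 0 ≤ c := hnn _
  have hcA : ∀ i ∈ A, lam i ≤ c := by
    intro i hi
    simp only [hA, mem_filter] at hi
    exact hlam (by simp [Fin.le_def]; omega)
  have hcB : ∀ i ∈ B, c ≤ lam i := by
    intro i hi
    simp only [hB, mem_filter] at hi
    exact hlam (by simp [Fin.le_def]; omega)
  have hsplit : ∀ f : Fin m → ℝ, ∑ i, f i = ∑ i ∈ A, f i + ∑ i ∈ B, f i := by
    intro f
    rw [hA, hB, Finset.sum_filter_add_sum_filter_not]
  have hcardA : (A.card : ℝ) = (m : ℝ) - k := by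
    rw [hA, aux_card_filter m k hkm]
    have : ((m - k : ℕ) : ℝ) = (m : ℝ) - k := by
      push_cast [hkm]; ring
    rw [this]
  have key : c * ((∑ i, s i) - ((m : ℝ) - k)) ≤ ∑ i, lam i * s i - ∑ i ∈ A, lam i := by
    have e1 : ∑ i, lam i * s i - ∑ i ∈ A, lam i
        = ∑ i ∈ A, lam i * (s i - 1) + ∑ i ∈ B, lam i * s i := by
      rw [hsplit (fun i => lam i * s i)]
      have h' : ∑ i ∈ A, lam i * (s i - 1) = ∑ i ∈ A, lam i * s i - ∑ i ∈ A, lam i := by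
        rw [← Finset.sum_sub_distrib]; apply Finset.sum_congr rfl; intros; ring
      linarith
    have hA2 : ∑ i ∈ A, c * (s i - 1) = c * (∑ i ∈ A, s i) - (A.card : ℝ) * c := by
      simp only [mul_sub, mul_one, Finset.sum_sub_distrib, Finset.mul_sum,
        Finset.sum_const, nsmul_eq_mul, mul_comm]
    have e2 : c * ((∑ i, s i) - ((m : ℝ) - k))
        = ∑ i ∈ A, c * (s i - 1) + ∑ i ∈ B, c * s i := by
      rw [hsplit s, ← hcardA, hA2, ← Finset.mul_sum]
      ring
    rw [e1, e2]
    apply add_le_add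
    · apply Finset.sum_le_sum
      intro i hi
      have h1 := hcA i hi
      have h2 := hs1 i
      nlinarith
    · apply Finset.sum_le_sum
      intro i hi
      exact mul_le_mul_of_nonneg_right (hcB i hi) (hs0 i)
  nlinarith

private lemma aux_min {E : Type*} [NormedAddCommGroup E] [InnerProductSpace ℝ E]
    [FiniteDimensional ℝ E] (K : Submodule ℝ E) (u v : E) (hv : v ∈ K) :
    ‖u - (K.orthogonalProjectionOnto u : E)‖ ^ 2 ≤ ‖u - v‖ ^ 2 := by
  have horth := Submodule.sub_starProjection_mem_orthogonal (K := K) u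
  have h0 : ⟪u - (K.orthogonalProjectionOnto u : E), (K.orthogonalProjectionOnto u : E) - v⟫ = 0 := by
    rw [real_inner_comm]; exact horth _ (K.sub_mem (K.orthogonalProjectionOnto u).2 hv)
  have hdec : u - v = (u - (K.orthogonalProjectionOnto u : E)) + ((K.orthogonalProjectionOnto u : E) - v) := by abel
  rw [hdec, norm_add_sq_real, h0]
  nlinarith [sq_nonneg ‖(K.orthogonalProjectionOnto u : E) - v‖]

private lemma aux_symm {E : Type*} [NormedAddCommGroup E] [InnerProductSpace ℝ E]
    [FiniteDimensional ℝ E] (K : Submodule ℝ E) (u v : E) :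
    ⟪u - (K.orthogonalProjectionOnto u : E), v⟫
      = ⟪u - (K.orthogonalProjectionOnto u : E), v - (K.orthogonalProjectionOnto v : E)⟫ := by
  have horth := Submodule.sub_starProjection_mem_orthogonal (K := K) u
  have h0 : ⟪u - (K.orthogonalProjectionOnto u : E), (K.orthogonalProjectionOnto v : E)⟫ = 0 := by
    rw [real_inner_comm]; exact horth _ (K.orthogonalProjectionOnto v).2
  rw [inner_sub_right, h0, sub_zero]

private lemma aux_bessel {E : Type*} [NormedAddCommGroup E] [InnerProductSpace ℝ E]
    [FiniteDimensional ℝ E] (K : Submodule ℝ E) {ι : Type*} [Fintype ι]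
    (g : ι → E) (hg : Orthonormal ℝ g) :
    ∑ i, ‖(K.orthogonalProjectionOnto (g i) : E)‖ ^ 2 ≤ (Module.finrank ℝ K : ℝ) := by
  classical
  let b := stdOrthonormalBasis ℝ K
  let u : Fin (Module.finrank ℝ K) → E := fun a => (b a : E)
  have hu : Orthonormal ℝ u := by
    rw [orthonormal_iff_ite]
    intro a a'
    have := b.orthonormal
    rw [orthonormal_iff_ite] at this
    have h2 := this a a'
    rwa [Submodule.coe_inner] at h2
  have hpars : ∀ w : K, ‖(w : E)‖ ^ 2 = ∑ a, ⟪u a, (w : E)⟫ ^ 2 := by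
    intro w
    have h1 : ∑ a, ⟪w, b a⟫ * ⟪b a, w⟫ = ⟪w, w⟫ := b.sum_inner_mul_inner w w
    have h2 : ‖(w : E)‖ ^ 2 = ⟪w, w⟫ := by
      rw [real_inner_self_eq_norm_sq]
      congr 1
    rw [h2, ← h1]
    apply Finset.sum_congr rfl
    intro a _
    rw [sq, ← Submodule.coe_inner, real_inner_comm w (b a)]
  have hproj : ∀ (i : ι) (a), ⟪u a, (K.orthogonalProjectionOnto (g i) : E)⟫ = ⟪u a, g i⟫ := by
    intro i a
    have horth := Submodule.sub_starProjection_mem_orthogonal (K := K) (g i)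
    have h0 : ⟪u a, g i - (K.orthogonalProjectionOnto (g i) : E)⟫ = 0 := horth (u a) (b a).2
    rw [inner_sub_right] at h0
    linarith
  calc ∑ i, ‖(K.orthogonalProjectionOnto (g i) : E)‖ ^ 2
      = ∑ i, ∑ a, ⟪u a, g i⟫ ^ 2 := by
        apply Finset.sum_congr rfl; intro i _
        rw [hpars (K.orthogonalProjectionOnto (g i))]
        apply Finset.sum_congr rfl; intro a _
        rw [hproj]
    _ = ∑ a, ∑ i, ⟪u a, g i⟫ ^ 2 := Finset.sum_comm
    _ ≤ ∑ a : Fin (Module.finrank ℝ K), (1 : ℝ) := by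
        apply Finset.sum_le_sum; intro a _
        have hb := hg.sum_inner_products_le (u a) (s := univ)
        have hn : ‖u a‖ ^ 2 = 1 := by
          rw [hu.1 a]; norm_num
        calc ∑ i, ⟪u a, g i⟫ ^ 2 = ∑ i, ‖⟪g i, u a⟫‖ ^ 2 := by
              apply Finset.sum_congr rfl; intro i _
              rw [real_inner_comm, Real.norm_eq_abs, sq_abs]
          _ ≤ ‖u a‖ ^ 2 := hb
          _ = 1 := hn
    _ = (Module.finrank ℝ K : ℝ) := by simp

private lemma aux_sum3 {α β γ : Type*} [Fintype α] [Fintype β] [Fintype γ]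
    (f : α → β → γ → ℝ) :
    ∑ a, ∑ b, ∑ c, f a b c = ∑ b, ∑ c, ∑ a, f a b c := by
  rw [Finset.sum_comm]
  apply Finset.sum_congr rfl; intro b _
  exact Finset.sum_comm

/-- Global lower bound for rank-`k` approximation: if `H` is orthogonal and
`Hᵀ (X Xᵀ) H = diag(λ)` with `λ` nonincreasing, then for every `k` with
`1 ≤ k ≤ m` and every `W ∈ ℝ^{m×k}`, `C ∈ ℝ^{k×n}`, the squared Frobenius
norm of `X − W C` is at least `λ_{k+1} + ... + λ_m`. -/
theorem frobenius_error_lower_bound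
    (m n : ℕ) (X : Matrix (Fin m) (Fin n) ℝ)
    (H : Matrix (Fin m) (Fin m) ℝ)
    (hH : Hᵀ * H = 1)
    (lam : Fin m → ℝ) (hlam : Antitone lam)
    (hdiag : Hᵀ * (X * Xᵀ) * H = Matrix.diagonal lam) :
    ∀ k : ℕ, 1 ≤ k → k ≤ m →
      ∀ (W : Matrix (Fin m) (Fin k) ℝ) (C : Matrix (Fin k) (Fin n) ℝ),
        ∑ i, ∑ j, ((X - W * C) i j) ^ 2
          ≥ ∑ i ∈ univ.filter (fun i : Fin m => k ≤ (i : ℕ)), lam i := by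
  intro k hk1 hkm W C
  classical
  let w : Fin k → EuclideanSpace ℝ (Fin m) := fun b => WithLp.toLp 2 (fun a => W a b : Fin m → ℝ)
  let x : Fin n → EuclideanSpace ℝ (Fin m) := fun j => WithLp.toLp 2 (fun a => X a j : Fin m → ℝ)
  let g : Fin m → EuclideanSpace ℝ (Fin m) := fun i => WithLp.toLp 2 (fun a => H a i : Fin m → ℝ)
  have hwdef : ∀ b a, w b a = W a b := fun _ _ => rfl
  have hxdef : ∀ j a, x j a = X a j := fun _ _ => rfl
  have hgdef : ∀ i a, g i a = H a i := fun _ _ => rfl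
  let K : Submodule ℝ (EuclideanSpace ℝ (Fin m)) := Submodule.span ℝ (Set.range w)
  let P : EuclideanSpace ℝ (Fin m) → EuclideanSpace ℝ (Fin m) := fun u => (K.orthogonalProjectionOnto u : EuclideanSpace ℝ (Fin m))
  let T : EuclideanSpace ℝ (Fin m) → EuclideanSpace ℝ (Fin m) := fun u => u - P u
  let s : Fin m → ℝ := fun i => ‖T (g i)‖ ^ 2
  have hPdef : ∀ u : EuclideanSpace ℝ (Fin m), P u = (K.orthogonalProjectionOnto u : EuclideanSpace ℝ (Fin m)) := fun _ => rfl
  have hTdef : ∀ u : EuclideanSpace ℝ (Fin m), T u = u - (K.orthogonalProjectionOnto u : EuclideanSpace ℝ (Fin m)) := fun _ => rfl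
  have hsdef : ∀ i, s i = ‖T (g i)‖ ^ 2 := fun _ => rfl
  -- generic: inner product as coordinate sum
  have hinner : ∀ u v : EuclideanSpace ℝ (Fin m), ⟪u, v⟫ = ∑ a, u a * v a := by
    intro u v; simp [PiLp.inner_apply, mul_comm]
  have hnormsq : ∀ u : EuclideanSpace ℝ (Fin m), ‖u‖ ^ 2 = ∑ a, u a * u a := by
    intro u; rw [← real_inner_self_eq_norm_sq]; exact hinner u u
  -- orthonormality of g
  have hginner : ∀ i i', ⟪g i, g i'⟫ = if i = i' then (1:ℝ) else 0 := by
    intro i i'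
    have h := congrFun (congrFun hH i) i'
    simp only [Matrix.mul_apply, Matrix.transpose_apply, Matrix.one_apply] at h
    rw [hinner]
    simp only [hgdef]
    exact h
  have hg : Orthonormal ℝ g := by
    rw [orthonormal_iff_ite]
    intro i j
    exact hginner i j
  -- the gram identity from hdiag
  have hgram : ∀ i i', ∑ j, ⟪g i, x j⟫ * ⟪g i', x j⟫ = Matrix.diagonal lam i i' := by
    intro i i'
    have h := congrFun (congrFun hdiag i) i'
    simp only [Matrix.mul_apply, Matrix.transpose_apply] at h
    rw [← h]
    simp only [hinner, hgdef, hxdef]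
    simp only [Finset.sum_mul, Finset.mul_sum]
    rw [aux_sum3 (fun (j : Fin n) (b : Fin m) (a : Fin m) => H a i * X a j * (H b i' * X b j))]
    apply Finset.sum_congr rfl; intro b _
    apply Finset.sum_congr rfl; intro a _
    apply Finset.sum_congr rfl; intro j _
    ring
  -- expansion of any vector in the g basis
  have hexp : ∀ u : EuclideanSpace ℝ (Fin m), u = ∑ i, ⟪g i, u⟫ • g i := by
    intro u
    have hHH : H * Hᵀ = 1 := mul_eq_one_comm.mp hH
    ext a
    rw [WithLp.ofLp_sum, Finset.sum_apply]
    simp only [PiLp.smul_apply, smul_eq_mul, hinner, hgdef]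
    have h := congrFun (congrFun hHH a) a
    calc u a = ∑ b, u b * (1 : Matrix (Fin m) (Fin m) ℝ) b a := by
          rw [Finset.sum_eq_single a]
          · simp [Matrix.one_apply]
          · intro b _ hb; simp [Matrix.one_apply, hb]
          · intro ha; exact absurd (Finset.mem_univ a) ha
      _ = ∑ b, u b * ∑ i, H b i * H a i := by
          apply Finset.sum_congr rfl; intro b _
          rw [← mul_eq_one_comm.mp hH]
          simp [Matrix.mul_apply, Matrix.transpose_apply]
      _ = ∑ i, (∑ b, H b i * u b) * H a i := by
          simp only [Finset.mul_sum, Finset.sum_mul]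
          rw [Finset.sum_comm]
          apply Finset.sum_congr rfl; intro i _
          apply Finset.sum_congr rfl; intro b _
          ring
  -- step 1: LHS as sum of column norms
  have h1 : ∑ i, ∑ j, ((X - W * C) i j) ^ 2 = ∑ j, ‖x j - ∑ b, C b j • w b‖ ^ 2 := by
    rw [Finset.sum_comm]
    apply Finset.sum_congr rfl
    intro j _
    rw [hnormsq]
    apply Finset.sum_congr rfl
    intro a _
    have hval : (x j - ∑ b, C b j • w b) a = (X - W * C) a j := by
      have h2 : (x j - ∑ b, C b j • w b) a = x j a - (∑ b, C b j • w b) a := rfl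
      rw [h2, WithLp.ofLp_sum, Finset.sum_apply]
      simp only [PiLp.smul_apply, smul_eq_mul, hxdef, hwdef]
      simp [Matrix.sub_apply, Matrix.mul_apply, mul_comm]
    rw [hval]; ring
  have hmemK : ∀ j, (∑ b, C b j • w b) ∈ K := fun j =>
    K.sum_mem fun b _ => K.smul_mem _ (Submodule.subset_span ⟨b, rfl⟩)
  have h2 : ∀ j, ‖T (x j)‖ ^ 2 ≤ ‖x j - ∑ b, C b j • w b‖ ^ 2 := fun j =>
    aux_min K (x j) _ (hmemK j)
  -- self-adjointness facts
  have hTsq : ∀ u : EuclideanSpace ℝ (Fin m), ‖T u‖ ^ 2 = ⟪u, T u⟫ := by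
    intro u
    rw [real_inner_comm]
    have := aux_symm K u u
    rw [hTdef, this, real_inner_self_eq_norm_sq]
  -- T as linear map
  let Tl : EuclideanSpace ℝ (Fin m) →ₗ[ℝ] EuclideanSpace ℝ (Fin m) := LinearMap.id - K.subtype ∘ₗ (K.orthogonalProjectionOnto).toLinearMap
  have hTl : ∀ u : EuclideanSpace ℝ (Fin m), T u = Tl u := fun u => rfl
  -- quadratic form expansion
  have hquad : ∀ u : EuclideanSpace ℝ (Fin m), ⟪u, T u⟫ = ∑ i, ∑ i', ⟪g i, u⟫ * ⟪g i', u⟫ * ⟪g i, T (g i')⟫ := by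
    intro u
    conv_lhs => rw [hTl, hexp u]
    rw [_root_.map_sum, inner_sum, Finset.sum_comm]
    apply Finset.sum_congr rfl
    intro i _
    rw [_root_.map_smul, real_inner_smul_right, sum_inner, Finset.mul_sum]
    apply Finset.sum_congr rfl
    intro i' _
    rw [real_inner_smul_left, ← hTl]
    ring
  -- step 2
  have h3 : ∑ j, ‖T (x j)‖ ^ 2 = ∑ i, lam i * s i := by
    calc ∑ j, ‖T (x j)‖ ^ 2
        = ∑ j, ∑ i, ∑ i', ⟪g i, x j⟫ * ⟪g i', x j⟫ * ⟪g i, T (g i')⟫ := by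
          apply Finset.sum_congr rfl; intro j _
          rw [hTsq, hquad]
      _ = ∑ i, ∑ i', (∑ j, ⟪g i, x j⟫ * ⟪g i', x j⟫) * ⟪g i, T (g i')⟫ := by
          rw [Finset.sum_comm]
          apply Finset.sum_congr rfl; intro i _
          rw [Finset.sum_comm]
          apply Finset.sum_congr rfl; intro i' _
          rw [Finset.sum_mul]
      _ = ∑ i, ∑ i', Matrix.diagonal lam i i' * ⟪g i, T (g i')⟫ := by
          apply Finset.sum_congr rfl; intro i _
          apply Finset.sum_congr rfl; intro i' _
          rw [hgram]
      _ = ∑ i, lam i * ⟪g i, T (g i)⟫ := by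
          apply Finset.sum_congr rfl; intro i _
          rw [Finset.sum_eq_single i]
          · simp [Matrix.diagonal]
          · intro i' _ hi'; simp [Matrix.diagonal, Ne.symm hi']
          · intro hi; exact absurd (Finset.mem_univ i) hi
      _ = ∑ i, lam i * s i := by
          apply Finset.sum_congr rfl; intro i _
          rw [hsdef, hTsq]
  -- step 3: properties of s
  have hs0 : ∀ i, 0 ≤ s i := fun i => sq_nonneg _
  have hgnorm : ∀ i, ‖g i‖ ^ 2 = 1 := by
    intro i
    rw [← real_inner_self_eq_norm_sq, hginner]
    simp
  have hpyth : ∀ i, s i = 1 - ‖P (g i)‖ ^ 2 := by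
    intro i
    have horth := Submodule.sub_starProjection_mem_orthogonal (K := K) (g i)
    have h0 : ⟪T (g i), P (g i)⟫ = 0 := by
      rw [real_inner_comm, hTdef, hPdef]
      exact horth _ (K.orthogonalProjectionOnto (g i)).2
    have hdec : g i = T (g i) + P (g i) := by rw [hTdef, hPdef]; abel
    have := hgnorm i
    rw [hdec, norm_add_sq_real, h0] at this
    rw [hsdef]; linarith
  have hs1 : ∀ i, s i ≤ 1 := by
    intro i; rw [hpyth i]; nlinarith [sq_nonneg ‖P (g i)‖]
  have hsum : (m : ℝ) - k ≤ ∑ i, s i := by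
    have hb := aux_bessel K g hg
    have hrk : (Module.finrank ℝ K : ℝ) ≤ k := by
      have h : Module.finrank ℝ K ≤ k := by
        have h0 := finrank_range_le_card (R := ℝ) w; rw [Fintype.card_fin] at h0; exact h0
      exact_mod_cast h
    have hx2 : ∑ i, s i = (m : ℝ) - ∑ i, ‖P (g i)‖ ^ 2 := by
      simp only [hpyth, Finset.sum_sub_distrib, Finset.sum_const, card_univ,
        Fintype.card_fin, nsmul_eq_mul, mul_one]
    rw [hx2]
    have : ∑ i, ‖P (g i)‖ ^ 2 ≤ (k : ℝ) := le_trans hb hrk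
    linarith
  -- step 4: nonnegativity of lam
  have hnn : ∀ i, 0 ≤ lam i := by
    intro i
    have := hgram i i
    simp [Matrix.diagonal] at this
    rw [← this]
    exact Finset.sum_nonneg fun j _ => mul_self_nonneg _
  -- conclude
  have hA := aux_weight m k hk1 hkm lam s hlam hnn hs0 hs1 hsum
  calc ∑ i ∈ univ.filter (fun i : Fin m => k ≤ (i : ℕ)), lam i
      ≤ ∑ i, lam i * s i := hA
    _ = ∑ j, ‖T (x j)‖ ^ 2 := h3.symm
    _ ≤ ∑ j, ‖x j - ∑ b, C b j • w b‖ ^ 2 := Finset.sum_le_sum fun j _ => h2 j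
    _ = ∑ i, ∑ j, ((X - W * C) i j) ^ 2 := h1.symm
end

section
/- Let X ∈ ℝ^{m×n} be a matrix with nonnegative entries and rank at most 2, with at least one nonzero column. Then there exist two column indices j_1, j_2 ∈ {1, ..., n} and a nonnegative matrix C ∈ ℝ^{2×n} such that X = W C, where W ∈ ℝ^{m×2} is the matrix whose columns are the columns x_{j_1} and x_{j_2} of X. Equivalently, every column of X is a nonnegative linear combination of the two columns x_{j_1} and x_{j_2}. -/
open Matrix

/-- A nonnegative matrix `X` of rank at most 2 with at least one nonzero column
admits a factorization `X = W C` where the two columns of `W` are columns of `X`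
and `C` is nonnegative: every column of `X` is a nonnegative combination of two
of its columns. -/
theorem nonneg_rank_two_factorization
    (m n : ℕ) (X : Matrix (Fin m) (Fin n) ℝ)
    (hX : ∀ i j, 0 ≤ X i j)
    (hrank : X.rank ≤ 2)
    (hcol : ∃ j, (fun i => X i j) ≠ 0) :
    ∃ (j1 j2 : Fin n) (C : Matrix (Fin 2) (Fin n) ℝ),
      (∀ a b, 0 ≤ C a b) ∧
      X = (Matrix.of fun i (t : Fin 2) => X i (![j1, j2] t)) * C := by
  classical
  set col : Fin n → (Fin m → ℝ) := fun j i => X i j with hcol_def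
  set V : Submodule ℝ (Fin m → ℝ) := Submodule.span ℝ (Set.range Xᵀ) with hV
  have hcolV : ∀ j, col j ∈ V := by
    intro j
    exact Submodule.subset_span ⟨j, rfl⟩
  have hVrank : Module.finrank ℝ V ≤ 2 := by
    rw [Matrix.rank_eq_finrank_span_cols] at hrank; exact_mod_cast hrank
  let L : (Fin m → ℝ) →ₗ[ℝ] ℝ := ∑ i, LinearMap.proj i
  have hL : ∀ v : Fin m → ℝ, L v = ∑ i, v i := by
    intro v; simp [L]
  set f : Fin n → ℝ := fun j => ∑ i, X i j with hf_def
  have hLcol : ∀ j, L (col j) = f j := fun j => hL _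
  have hf0 : ∀ j, 0 ≤ f j := fun j => Finset.sum_nonneg fun i _ => hX i j
  have hzero : ∀ j, f j = 0 → col j = 0 := by
    intro j h
    funext i
    exact (Finset.sum_eq_zero_iff_of_nonneg (fun i _ => hX i j)).1 h i (Finset.mem_univ i)
  have hfpos : ∀ j, col j ≠ 0 → 0 < f j := by
    intro j hj
    rcases (hf0 j).lt_or_eq with h | h
    · exact h
    · exact absurd (hzero j h.symm) hj
  -- normalized columns
  set y : Fin n → (Fin m → ℝ) := fun j => (f j)⁻¹ • col j with hy_def
  have hyV : ∀ j, y j ∈ V := fun j => Submodule.smul_mem _ _ (hcolV j)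
  have hLy : ∀ j, col j ≠ 0 → L (y j) = 1 := by
    intro j hj
    have := hfpos j hj
    simp [hy_def, hLcol j, inv_mul_cancel₀ this.ne']
  have hcoly : ∀ j, col j ≠ 0 → col j = f j • y j := by
    intro j hj
    rw [hy_def]
    rw [smul_smul, mul_inv_cancel₀ (hfpos j hj).ne', one_smul]
  -- collinearity of elements of V killed by L
  have key : ∀ d w : Fin m → ℝ, d ∈ V → w ∈ V → L d = 0 → L w = 0 → d ≠ 0 →
      ∃ t : ℝ, t • d = w := by
    intro d w hdV hwV hdL hwL hd0
    by_contra hcon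
    push_neg at hcon
    have hli : LinearIndependent ℝ ![d, w] := (LinearIndependent.pair_iff' hd0).2 hcon
    set S : Submodule ℝ (Fin m → ℝ) := Submodule.span ℝ (Set.range ![d, w]) with hS
    have hSV : S ≤ V := by
      rw [hS, Submodule.span_le]
      rintro x ⟨i, rfl⟩
      fin_cases i
      · exact hdV
      · exact hwV
    have h2 : Module.finrank ℝ S = 2 := by
      rw [hS, finrank_span_eq_card hli]
      simp
    have hVS : S = V := Submodule.eq_of_le_of_finrank_le hSV (by rw [h2]; exact hVrank)
    have hker : S ≤ LinearMap.ker L := by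
      rw [hS, Submodule.span_le]
      rintro x ⟨i, rfl⟩
      fin_cases i
      · simpa using hdL
      · simpa using hwL
    obtain ⟨j0, hj0⟩ := hcol
    have hj0' : col j0 ≠ 0 := hj0
    have : L (col j0) = 0 := hker (hVS ▸ hcolV j0)
    rw [hLcol j0] at this
    exact (hfpos j0 hj0').ne' this
  obtain ⟨j0, hj0⟩ := hcol
  have hj0' : col j0 ≠ 0 := hj0
  by_cases hcase : ∀ j, col j ≠ 0 → y j = y j0
  · -- all normalized columns coincide
    refine ⟨j0, j0, Matrix.of fun a j => if a = 0 then f j / f j0 else 0, ?_, ?_⟩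
    · intro a b
      dsimp only [Matrix.of_apply]
      split
      · exact div_nonneg (hf0 b) (hf0 j0)
      · exact le_rfl
    · have hvec : ∀ j, col j = (f j / f j0) • col j0 := by
        intro j
        by_cases hj : col j = 0
        · have hfj : f j = 0 := Finset.sum_eq_zero fun i _ => congrFun hj i
          rw [hj, hfj, zero_div, zero_smul]
        · rw [hcoly j hj, hcase j hj, hy_def, smul_smul, div_eq_mul_inv]
      ext i j
      have h := congrFun (hvec j) i
      simp only [Pi.smul_apply, smul_eq_mul] at h
      rw [Matrix.mul_apply, Fin.sum_univ_two]
      simp only [Matrix.of_apply, Matrix.cons_val_zero, Matrix.cons_val_one,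
        Matrix.head_cons, if_pos rfl]
      rw [if_neg (by decide : ¬(1 : Fin 2) = 0)]
      simp only [hcol_def] at h
      norm_num
      linear_combination h
  · push_neg at hcase
    obtain ⟨a, ha, hya⟩ := hcase
    -- the direction vector
    set d : Fin m → ℝ := y a - y j0 with hd_def
    have hd0 : d ≠ 0 := sub_ne_zero.2 hya
    have hdV : d ∈ V := Submodule.sub_mem _ (hyV a) (hyV j0)
    have hdL : L d = 0 := by
      rw [hd_def, map_sub, hLy a ha, hLy j0 hj0', sub_self]
    have ht : ∀ j, col j ≠ 0 → ∃ s : ℝ, y j = y j0 + s • d := by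
      intro j hj
      have hwV : y j - y j0 ∈ V := Submodule.sub_mem _ (hyV j) (hyV j0)
      have hwL : L (y j - y j0) = 0 := by
        rw [map_sub, hLy j hj, hLy j0 hj0', sub_self]
      obtain ⟨s, hs⟩ := key d (y j - y j0) hdV hwV hdL hwL hd0
      exact ⟨s, by rw [hs]; abel⟩
    set t : Fin n → ℝ := fun j => if h : col j ≠ 0 then Classical.choose (ht j h) else 0
      with ht_def
    have hty : ∀ j (h : col j ≠ 0), y j = y j0 + t j • d := by
      intro j h
      simp only [ht_def, dif_pos h]
      exact Classical.choose_spec (ht j h)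
    have htj0 : t j0 = 0 := by
      have := hty j0 hj0'
      have h2 : t j0 • d = 0 := by
        have := left_eq_add.1 this
        exact this
      rcases smul_eq_zero.1 h2 with h | h
      · exact h
      · exact absurd h hd0
    have hta : t a ≠ 0 := by
      intro h
      have := hty a ha
      rw [h, zero_smul, add_zero] at this
      exact hya this
    -- extreme indices
    set S : Finset (Fin n) := Finset.univ.filter (fun j => col j ≠ 0) with hS_def
    have haS : a ∈ S := Finset.mem_filter.2 ⟨Finset.mem_univ _, ha⟩
    have hj0S : j0 ∈ S := Finset.mem_filter.2 ⟨Finset.mem_univ _, hj0'⟩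
    obtain ⟨j1, hj1S, hj1min⟩ := S.exists_min_image t ⟨a, haS⟩
    obtain ⟨j2, hj2S, hj2max⟩ := S.exists_max_image t ⟨a, haS⟩
    have hj1nz : col j1 ≠ 0 := (Finset.mem_filter.1 hj1S).2
    have hj2nz : col j2 ≠ 0 := (Finset.mem_filter.1 hj2S).2
    set δ : ℝ := t j2 - t j1 with hδ_def
    have hδpos : 0 < δ := by
      rcases hta.lt_or_gt with h | h
      · have h1 : t j1 ≤ t a := hj1min a haS
        have h2 : t j0 ≤ t j2 := hj2max j0 hj0S
        rw [htj0] at h2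
        rw [hδ_def]; linarith
      · have h1 : t j1 ≤ t j0 := hj1min j0 hj0S
        have h2 : t a ≤ t j2 := hj2max a haS
        rw [htj0] at h1
        rw [hδ_def]; linarith
    refine ⟨j1, j2, Matrix.of fun b j =>
      if hj : col j ≠ 0 then
        (if b = 0 then f j * ((t j2 - t j) / δ) / f j1 else f j * ((t j - t j1) / δ) / f j2)
      else 0, ?_, ?_⟩
    · intro b j
      dsimp only [Matrix.of_apply]
      split
      · rename_i hj
        have h1 : t j1 ≤ t j := hj1min j (Finset.mem_filter.2 ⟨Finset.mem_univ _, hj⟩)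
        have h2 : t j ≤ t j2 := hj2max j (Finset.mem_filter.2 ⟨Finset.mem_univ _, hj⟩)
        split
        · exact div_nonneg (mul_nonneg (hf0 j) (div_nonneg (by linarith) hδpos.le))
            (hf0 j1)
        · exact div_nonneg (mul_nonneg (hf0 j) (div_nonneg (by linarith) hδpos.le))
            (hf0 j2)
      · exact le_rfl
    · have hvec : ∀ j, col j =
          (if hj : col j ≠ 0 then f j * ((t j2 - t j) / δ) / f j1 else 0) • col j1 +
          (if hj : col j ≠ 0 then f j * ((t j - t j1) / δ) / f j2 else 0) • col j2 := by
        intro j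
        by_cases hj : col j ≠ 0
        · rw [dif_pos hj, dif_pos hj]
          funext i
          simp only [Pi.add_apply, Pi.smul_apply, smul_eq_mul]
          have e : y j i = y j0 i + t j * d i := by
            have := congrFun (hty j hj) i; simpa using this
          have e1 : y j1 i = y j0 i + t j1 * d i := by
            have := congrFun (hty j1 hj1nz) i; simpa using this
          have e2 : y j2 i = y j0 i + t j2 * d i := by
            have := congrFun (hty j2 hj2nz) i; simpa using this
          have c : col j i = f j * y j i := by
            have := congrFun (hcoly j hj) i; simpa using this
          have c1 : col j1 i = f j1 * y j1 i := by
            have := congrFun (hcoly j1 hj1nz) i; simpa using this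
          have c2 : col j2 i = f j2 * y j2 i := by
            have := congrFun (hcoly j2 hj2nz) i; simpa using this
          have hδ : δ ≠ 0 := hδpos.ne'
          have hf1 : f j1 ≠ 0 := (hfpos j1 hj1nz).ne'
          have hf2 : f j2 ≠ 0 := (hfpos j2 hj2nz).ne'
          have hyc : y j i = (t j2 - t j) / δ * y j1 i + (t j - t j1) / δ * y j2 i := by
            rw [e, e1, e2, hδ_def]
            rw [eq_comm, div_mul_eq_mul_div, div_mul_eq_mul_div, ← add_div,
              div_eq_iff (show t j2 - t j1 ≠ 0 from hδ)]
            ring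
          rw [c, c1, c2, hyc]
          field_simp
        · push_neg at hj
          rw [dif_neg (by simpa using hj), dif_neg (by simpa using hj), hj,
            zero_smul, zero_smul, add_zero]
      ext i j
      have h := congrFun (hvec j) i
      simp only [Pi.add_apply, Pi.smul_apply, smul_eq_mul] at h
      rw [Matrix.mul_apply, Fin.sum_univ_two]
      simp only [Matrix.of_apply, Matrix.cons_val_zero, Matrix.cons_val_one,
        Matrix.head_cons]
      simp only [hcol_def] at h ⊢
      by_cases hz : (fun i : Fin m => X i j) = 0
      · simp only [hz, ne_eq, not_true_eq_false, dif_neg, not_false_iff] at h ⊢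
        simp at h ⊢
        linarith [h]
      · simp only [ne_eq, hz, not_false_iff, dif_pos] at h ⊢
        rw [if_pos trivial, if_neg (by decide : ¬((1 : Fin 2) = 0))]
        linear_combination h
end
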